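/- arXiv:1007.1098 — 4 statements merged into one kernel-verified Lean document; each statement's English description precedes it below -/
import Mathlib

section
/- Let L = ⊕_{i=−r}^{s} L_i be a simple, finite-dimensional, ℤ-graded Lie algebra over a field F. Then L_{−r} and L_s are irreducible L_0-modules under the adjoint action, i.e. the only L_0-submodules (subspaces V with ⁅L_0, V⁆ ⊆ V) of L_{−r}, respectively of L_s, are 0 and the whole component. -/
/-!
Let `V ≤ L_{-r}` be an `L_0`-submodule and let `I` be the smallest subspace containing `V` that is
stable under `ad y` for every homogeneous `y` of non-negative degree. As `L_{<0}` kills `V`, the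
Jacobi identity `⁅x, ⁅y, u⁆⁆ = ⁅⁅x, y⁆, u⁆ + ⁅y, ⁅x, u⁆⁆` propagates stability under `ad L_{<0}`
from `V` to all of `I`, so `I` is an ideal, hence `0` or `L`. Since `V ⊕ L_{>-r}` contains `V` and
is stable under `ad L_{≥0}`, the degree `-r` part of `I` is `V`; so `I = L` forces `V = L_{-r}`.
The statement for `L_s` is the one for `L_{-r}` in the reversed grading.
-/

open LieAlgebra

theorem DirectSum.IsInternal.comp_equiv {ι ι' R M : Type*} [DecidableEq ι] [DecidableEq ι']
    [Ring R] [AddCommGroup M] [Module R M] {A : ι → Submodule R M} (h : IsInternal A)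
    (e : ι' ≃ ι) : IsInternal (A ∘ e) :=
  (isInternal_submodule_iff_iSupIndep_and_iSup_eq_top _).2
    ⟨h.submodule_iSupIndep.comp e.injective, (e.iSup_comp (g := A)).trans h.submodule_iSup_eq_top⟩

namespace Submodule

variable {R L : Type*} [CommRing R] [LieRing L] [LieAlgebra R L]

section adClosure

variable {S T : Set L} {W U : Submodule R L}

def adClosure (S : Set L) (W : Submodule R L) : Submodule R L :=
  sInf {U | W ≤ U ∧ ∀ y ∈ S, ∀ u ∈ U, ⁅y, u⁆ ∈ U}

theorem le_adClosure : W ≤ adClosure S W :=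
  fun _ hw ↦ mem_sInf.2 fun _ hU ↦ hU.1 hw

theorem lie_mem_adClosure {y u : L} (hy : y ∈ S) (hu : u ∈ adClosure S W) :
    ⁅y, u⁆ ∈ adClosure S W :=
  mem_sInf.2 fun U hU ↦ hU.2 y hy u (mem_sInf.1 hu U hU)

theorem adClosure_le (hW : W ≤ U) (hU : ∀ y ∈ S, ∀ u ∈ U, ⁅y, u⁆ ∈ U) : adClosure S W ≤ U :=
  sInf_le ⟨hW, hU⟩

theorem lie_mem_of_mem_span {u z : L} (hu : ∀ y ∈ S, ⁅y, u⁆ ∈ U) (hz : z ∈ span R S) :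
    ⁅z, u⁆ ∈ U := by
  induction hz using span_induction with
  | mem y hy => exact hu y hy
  | zero => simp
  | add a b _ _ ha hb => rw [add_lie]; exact add_mem ha hb
  | smul c a _ ha => rw [smul_lie]; exact smul_mem _ c ha

theorem lie_mem_adClosure_of_span_union_eq_top (hST : span R (S ∪ T) = ⊤)
    (hTW : ∀ x ∈ T, ∀ w ∈ W, ⁅x, w⁆ ∈ W) (z : L) {u : L} (hu : u ∈ adClosure S W) :
    ⁅z, u⁆ ∈ adClosure S W := by
  set I := adClosure S W
  have lie_mem_of_forall_T {u : L} (hu : u ∈ I) (hTu : ∀ x ∈ T, ⁅x, u⁆ ∈ I) (z : L) :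
      ⁅z, u⁆ ∈ I := by
    refine lie_mem_of_mem_span (S := S ∪ T) ?_ (hST ▸ mem_top)
    rintro y (hy | hy)
    exacts [lie_mem_adClosure hy hu, hTu y hy]
  let U : Submodule R L := I ⊓ ⨅ x ∈ T, I.comap (ad R L x)
  have mem_U {u : L} : u ∈ U ↔ u ∈ I ∧ ∀ x ∈ T, ⁅x, u⁆ ∈ I := by
    simp only [U, mem_inf, mem_iInf, mem_comap, ad_apply]
  suffices I ≤ U from lie_mem_of_forall_T hu (mem_U.1 (this hu)).2 z
  refine adClosure_le
    (fun w hw ↦ mem_U.2 ⟨le_adClosure hw, fun x hx ↦ le_adClosure (hTW x hx w hw)⟩)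
    fun y hy u hu ↦ ?_
  obtain ⟨huI, hTu⟩ := mem_U.1 hu
  refine mem_U.2 ⟨lie_mem_adClosure hy huI, fun x hx ↦ ?_⟩
  rw [leibniz_lie]
  exact add_mem (lie_mem_of_forall_T huI hTu _) (lie_mem_adClosure hy (hTu x hx))

theorem adClosure_eq_bot_or_eq_top [IsSimple R L] (hST : span R (S ∪ T) = ⊤)
    (hTW : ∀ x ∈ T, ∀ w ∈ W, ⁅x, w⁆ ∈ W) : adClosure S W = ⊥ ∨ adClosure S W = ⊤ := by
  let I : LieIdeal R L :=
    { adClosure S W with lie_mem := lie_mem_adClosure_of_span_union_eq_top hST hTW _ }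
  simpa [← LieSubmodule.toSubmodule_eq_bot, ← LieSubmodule.toSubmodule_eq_top, I]
    using IsSimple.eq_bot_or_eq_top I

end adClosure

end Submodule

section Graded

open Submodule

variable {R L : Type*} [CommRing R] [LieRing L] [LieAlgebra R L] {Lg : ℤ → Submodule R L}

theorem lie_mem_biSup_of_mem (hbracket : ∀ i j : ℤ, ∀ x ∈ Lg i, ∀ y ∈ Lg j, ⁅x, y⁆ ∈ Lg (i + j))
    {p q : ℤ → Prop} {i : ℤ} (hpq : ∀ j, p j → q (i + j)) {y x : L} (hy : y ∈ Lg i)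
    (hx : x ∈ ⨆ (j) (_ : p j), Lg j) : ⁅y, x⁆ ∈ ⨆ (k) (_ : q k), Lg k := by
  refine iSup_induction _ (motive := fun x ↦ ⁅y, x⁆ ∈ ⨆ (k) (_ : q k), Lg k) hx
    (fun j x hx ↦ ?_) (by simp) fun a b ha hb ↦ by rw [lie_add]; exact add_mem ha hb
  by_cases hj : p j
  · rw [iSup_pos hj] at hx
    exact le_iSup₂ (f := fun k (_ : q k) ↦ Lg k) (i + j) (hpq j hj) (hbracket i j y hy x hx)
  · rw [iSup_neg hj, mem_bot] at hx
    simp [hx]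

theorem span_homogeneous_eq_top (hLg : ⨆ i, Lg i = ⊤) :
    span R ({y | ∃ i, 0 ≤ i ∧ y ∈ Lg i} ∪ {y | ∃ i, i < 0 ∧ y ∈ Lg i}) = ⊤ := by
  refine top_le_iff.1 (hLg ▸ iSup_le fun i y hy ↦ subset_span ?_)
  rcases le_or_gt 0 i with hi | hi
  exacts [Or.inl ⟨i, hi, hy⟩, Or.inr ⟨i, hi, hy⟩]

theorem lie_mem_sup_iSup_gt (hbracket : ∀ i j : ℤ, ∀ x ∈ Lg i, ∀ y ∈ Lg j, ⁅x, y⁆ ∈ Lg (i + j))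
    {r : ℤ} {V : Submodule R L} (hV : V ≤ Lg (-r)) (hV0 : ∀ x ∈ Lg 0, ∀ v ∈ V, ⁅x, v⁆ ∈ V)
    {i : ℤ} (hi : 0 ≤ i) {y u : L} (hy : y ∈ Lg i) (hu : u ∈ V ⊔ ⨆ (j) (_ : -r < j), Lg j) :
    ⁅y, u⁆ ∈ V ⊔ ⨆ (j) (_ : -r < j), Lg j := by
  obtain ⟨v, hv, x, hx, rfl⟩ := mem_sup.1 hu
  rw [lie_add]
  refine add_mem ?_ (mem_sup_right (lie_mem_biSup_of_mem hbracket (fun j hj ↦ by omega) hy hx))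
  rcases hi.eq_or_lt with rfl | hi
  · exact mem_sup_left (hV0 y hy v hv)
  · exact mem_sup_right (le_iSup₂ (f := fun j (_ : -r < j) ↦ Lg j) (i + -r) (by omega)
      (hbracket i (-r) y hy v (hV hv)))

theorem eq_bot_or_eq_of_lie_mem_lowest [IsSimple R L] (hinternal : DirectSum.IsInternal Lg)
    (hbracket : ∀ i j : ℤ, ∀ x ∈ Lg i, ∀ y ∈ Lg j, ⁅x, y⁆ ∈ Lg (i + j))
    {r : ℤ} (hlow : ∀ i < -r, Lg i = ⊥) {V : Submodule R L} (hV : V ≤ Lg (-r))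
    (hV0 : ∀ x ∈ Lg 0, ∀ v ∈ V, ⁅x, v⁆ ∈ V) : V = ⊥ ∨ V = Lg (-r) := by
  have hTV : ∀ x ∈ {y | ∃ i, i < 0 ∧ y ∈ Lg i}, ∀ v ∈ V, ⁅x, v⁆ ∈ V := by
    rintro x ⟨i, hi, hx⟩ v hv
    have hxv := hbracket i (-r) x hx v (hV hv)
    rw [hlow _ (by omega), mem_bot] at hxv
    exact hxv ▸ zero_mem V
  rcases adClosure_eq_bot_or_eq_top (span_homogeneous_eq_top hinternal.submodule_iSup_eq_top)
    hTV with h | h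
  · exact Or.inl (eq_bot_iff.2 (h ▸ le_adClosure))
  set X := ⨆ (j) (_ : -r < j), Lg j
  have hVX : ⊤ ≤ V ⊔ X :=
    h ▸ adClosure_le le_sup_left fun y ⟨i, hi, hy⟩ _ ↦ lie_mem_sup_iSup_gt hbracket hV hV0 hi hy
  have hX : Disjoint X (Lg (-r)) :=
    (hinternal.submodule_iSupIndep (-r)).symm.mono_left (biSup_mono fun _ ↦ ne_of_gt)
  refine Or.inr (Eq.symm ?_)
  calc Lg (-r) = (V ⊔ X) ⊓ Lg (-r) := (inf_eq_right.2 (le_top.trans hVX)).symm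
    _ = V ⊔ X ⊓ Lg (-r) := sup_inf_assoc_of_le X hV
    _ = V := by rw [hX.eq_bot, sup_bot_eq]

end Graded

theorem graded_simple_extreme_components_irreducible_general
    (F : Type*) [Field F] (L : Type*) [LieRing L] [LieAlgebra F L]
    [LieAlgebra.IsSimple F L]
    (r s : ℤ)
    (Lg : ℤ → Submodule F L)
    (hinternal : DirectSum.IsInternal Lg)
    (hbracket : ∀ i j : ℤ, ∀ x ∈ Lg i, ∀ y ∈ Lg j, ⁅x, y⁆ ∈ Lg (i + j))
    (hbound : ∀ i : ℤ, (i < -r ∨ s < i) → Lg i = ⊥) :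
    (∀ V : Submodule F L, V ≤ Lg (-r) →
        (∀ x ∈ Lg 0, ∀ v ∈ V, ⁅x, v⁆ ∈ V) → V = ⊥ ∨ V = Lg (-r)) ∧
    (∀ V : Submodule F L, V ≤ Lg s →
        (∀ x ∈ Lg 0, ∀ v ∈ V, ⁅x, v⁆ ∈ V) → V = ⊥ ∨ V = Lg s) := by
  refine ⟨fun V hV hV0 ↦ eq_bot_or_eq_of_lie_mem_lowest hinternal hbracket
    (fun i hi ↦ hbound i (.inl hi)) hV hV0, fun V hV hV0 ↦ ?_⟩
  have hreversed := eq_bot_or_eq_of_lie_mem_lowest (Lg := fun i ↦ Lg (-i)) (r := s)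
    (hinternal.comp_equiv (Equiv.neg ℤ))
    (fun i j x hx y hy ↦ by simpa only [neg_add] using hbracket _ _ x hx y hy)
    (fun i hi ↦ hbound (-i) (.inr (by omega))) (by simpa using hV) (by simpa using hV0)
  simpa using hreversed

/-- Let `L = ⊕_{i=-r}^{s} L_i` be a simple, finite-dimensional, ℤ-graded Lie
algebra over a field `F`. Then `L_{-r}` and `L_s` are irreducible `L_0`-modules under the
adjoint action: the only `L_0`-submodules of `L_{-r}` (resp. `L_s`) are `0` and the whole
component. -/
theorem graded_simple_extreme_components_irreducible
    (F : Type*) [Field F] (L : Type*) [LieRing L] [LieAlgebra F L]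
    [FiniteDimensional F L] [LieAlgebra.IsSimple F L]
    (r s : ℤ) (hr : 1 ≤ r) (hs : 1 ≤ s)
    (Lg : ℤ → Submodule F L)
    (hinternal : DirectSum.IsInternal Lg)
    (hbracket : ∀ i j : ℤ, ∀ x ∈ Lg i, ∀ y ∈ Lg j, ⁅x, y⁆ ∈ Lg (i + j))
    (hbound : ∀ i : ℤ, (i < -r ∨ s < i) → Lg i = ⊥)
    (hner : Lg (-r) ≠ ⊥) (hnes : Lg s ≠ ⊥) :
    (∀ V : Submodule F L, V ≤ Lg (-r) →
        (∀ x ∈ Lg 0, ∀ v ∈ V, ⁅x, v⁆ ∈ V) → V = ⊥ ∨ V = Lg (-r)) ∧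
    (∀ V : Submodule F L, V ≤ Lg s →
        (∀ x ∈ Lg 0, ∀ v ∈ V, ⁅x, v⁆ ∈ V) → V = ⊥ ∨ V = Lg s) :=
  graded_simple_extreme_components_irreducible_general F L r s Lg hinternal hbracket hbound
end

section
/- Let L = ⊕_{i=−r}^{s} L_i be a simple, finite-dimensional, ℤ-graded Lie algebra over a field F. Then ⁅L_0, L_s⁆ = L_s and ⁅L_0, L_{−r}⁆ = L_{−r}. -/
/-!
Put `V = ⁅L₀, L_s⁆ ⊆ L_s`. Since `L_{>0}` kills `L_s`, the `L_{≤0}`-submodule generated by an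
`ad L₀`-stable `V ⊆ L_s` is already an ideal, and as negative degrees only lower the degree,
its degree-`s` part is `V` itself. By simplicity this ideal is `0` or `L`, so `V = L_s` unless
`V = 0`. If `⁅L₀, L_s⁆ = 0`, the same argument with `L_{<0}` shows that `L` is the
`L_{<0}`-submodule generated by `L_s`; the homogeneous elements `z` of degree `e` with
`⁅z, L_m⁆ = 0` for all `m ≥ s - e` form an `L_{<0}`-stable graded subspace containing `L_s`,
hence everything, so `L_s` meets `⁅L, L⁆ = L` trivially and `L_s = 0`. Reversing the grading
gives the statement for `L_{-r}`.
-/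

open LieSubmodule

theorem iSupIndep.iSup_inf_eq_of_le {α ι : Type*} [CompleteLattice α] [IsModularLattice α]
    {A M : ι → α} (hA : iSupIndep A) (hM : M ≤ A) (i : ι) : (⨆ j, M j) ⊓ A i = M i := by
  refine le_antisymm ?_ (le_inf (le_iSup M i) (hM i))
  calc (⨆ j, M j) ⊓ A i ≤ (M i ⊔ ⨆ (j) (_ : j ≠ i), A j) ⊓ A i := by
        rw [iSup_split_single M i]
        gcongr with j
        exact hM j
    _ = M i ⊔ (⨆ (j) (_ : j ≠ i), A j) ⊓ A i := sup_inf_assoc_of_le _ (hM i)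
    _ = M i := by rw [(hA i).symm.eq_bot, sup_bot_eq]

section

variable {R L M : Type*} [CommRing R] [LieRing L] [LieAlgebra R L]
  [AddCommGroup M] [Module R M] [LieRingModule L M]

theorem lie_mem_of_mem_iSup_left {ι : Type*} {A : ι → Submodule R L} {C : Submodule R M}
    {y : M} (h : ∀ i, ∀ x ∈ A i, ⁅x, y⁆ ∈ C) {x : L} (hx : x ∈ ⨆ i, A i) : ⁅x, y⁆ ∈ C :=
  Submodule.iSup_induction A (motive := fun x => ⁅x, y⁆ ∈ C) hx h
    (by rw [zero_lie]; exact zero_mem C) fun a b ha hb => by rw [add_lie]; exact add_mem ha hb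

theorem lie_mem_of_mem_iSup {ι κ : Type*} {A : ι → Submodule R L} {B : κ → Submodule R M}
    {C : Submodule R M} (h : ∀ i j, ∀ x ∈ A i, ∀ y ∈ B j, ⁅x, y⁆ ∈ C) {x : L} {y : M}
    (hx : x ∈ ⨆ i, A i) (hy : y ∈ ⨆ j, B j) : ⁅x, y⁆ ∈ C := by
  refine lie_mem_of_mem_iSup_left (fun i x hx => ?_) hx
  exact Submodule.iSup_induction B (motive := fun y => ⁅x, y⁆ ∈ C) hy
    (fun j y hy => h i j x hx y hy) (by rw [lie_zero]; exact zero_mem C)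
    fun a b ha hb => by rw [lie_add]; exact add_mem ha hb

end

namespace LieAlgebra.IsSimple

variable {R L : Type*} [CommRing R] [LieRing L] [LieAlgebra R L] [IsSimple R L]

theorem lie_top_eq_top : ⁅(⊤ : LieIdeal R L), (⊤ : LieIdeal R L)⁆ = ⊤ :=
  lie_eq_self_of_isAtom_of_nonabelian ⊤ isAtom_top
    ((lie_abelian_iff_equiv_lie_abelian LieIdeal.topEquiv).not.mpr (non_abelian R))

theorem lieSpan_eq_top {V : Submodule R L} (hV : V ≠ ⊥) : lieSpan R L (V : Set L) = ⊤ :=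
  (eq_bot_or_eq_top _).resolve_left fun h =>
    hV ((Submodule.eq_bot_iff V).mpr ((lieSpan_eq_bot_iff R L L).mp h))

end LieAlgebra.IsSimple

namespace LieSubmodule

variable {R L : Type*} [CommRing R] [LieRing L] [LieAlgebra R L]

theorem toSubmodule_lieSpan_le_of_lie_mem (K : LieSubalgebra R L) {s : Set L}
    (h : ∀ x : L, ∀ v ∈ s, ⁅x, v⁆ ∈ lieSpan R K s) :
    (lieSpan R L s).toSubmodule ≤ (lieSpan R K s).toSubmodule := by
  -- The induction hypothesis must hold for every `x`: it is used again for `⁅x, k⁆`.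
  have hlie : ∀ w ∈ lieSpan R K s, ∀ x : L, ⁅x, w⁆ ∈ lieSpan R K s := by
    intro w hw
    induction hw using lieSpan_induction with
    | mem v hv => exact fun x => h x v hv
    | zero => simp
    | add a b _ _ ha hb => intro x; rw [lie_add]; exact add_mem (ha x) (hb x)
    | smul c a _ ha => intro x; rw [lie_smul]; exact Submodule.smul_mem _ c (ha x)
    | lie k w _ hw =>
      intro x
      rw [LieSubalgebra.coe_bracket_of_module, leibniz_lie]
      exact add_mem (hw _) (lie_mem _ (hw x))
  let I : LieIdeal R L :=
    { (lieSpan R K s).toSubmodule with lie_mem := fun hw => hlie _ hw _ }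
  exact (lieSpan_le (N := I)).mpr (subset_lieSpan (L := K))

end LieSubmodule

def IsLieGraded {R L : Type*} [CommRing R] [LieRing L] [LieAlgebra R L]
    (Lg : ℤ → Submodule R L) : Prop :=
  ∀ i j : ℤ, ∀ x ∈ Lg i, ∀ y ∈ Lg j, ⁅x, y⁆ ∈ Lg (i + j)

namespace IsLieGraded

variable {R L : Type*} [CommRing R] [LieRing L] [LieAlgebra R L] {Lg : ℤ → Submodule R L}

theorem comp_neg (hLg : IsLieGraded Lg) : IsLieGraded fun i => Lg (-i) := by
  intro i j x hx y hy
  simpa only [neg_add] using hLg (-i) (-j) x hx y hy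

theorem lie_eq_zero_of_lt_add (hLg : IsLieGraded Lg) {s : ℤ} (hbound : ∀ i, s < i → Lg i = ⊥)
    {i j : ℤ} (hij : s < i + j) {x y : L} (hx : x ∈ Lg i) (hy : y ∈ Lg j) : ⁅x, y⁆ = 0 := by
  simpa [hbound _ hij] using hLg i j x hx y hy

def subalgebra (hLg : IsLieGraded Lg) (S : Set ℤ) (hS : ∀ i ∈ S, ∀ j ∈ S, i + j ∈ S) :
    LieSubalgebra R L where
  toSubmodule := ⨆ j : S, Lg j
  lie_mem' hx hy := lie_mem_of_mem_iSup (fun (i j : S) x hx y hy =>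
    Submodule.mem_iSup_of_mem (⟨i + j, hS i i.2 j j.2⟩ : S) (hLg i j x hx y hy)) hx hy

theorem mem_subalgebra (hLg : IsLieGraded Lg) {S : Set ℤ} (hS : ∀ i ∈ S, ∀ j ∈ S, i + j ∈ S)
    {j : ℤ} (hj : j ∈ S) {x : L} (hx : x ∈ Lg j) : x ∈ hLg.subalgebra S hS :=
  Submodule.mem_iSup_of_mem (⟨j, hj⟩ : S) hx

theorem toSubmodule_lieSpan_le_iSup (hLg : IsLieGraded Lg) (htop : ⨆ i, Lg i = ⊤)
    {S : Set ℤ} (hS : ∀ i ∈ S, ∀ j ∈ S, i + j ∈ S) {M : ℤ → Submodule R L}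
    (hM : ∀ j ∈ S, ∀ d, ∀ x ∈ Lg j, ∀ m ∈ M d, ⁅x, m⁆ ∈ M (j + d)) {V : Set L}
    (hVM : V ⊆ (⨆ d, M d : Submodule R L)) (hV : ∀ i ∉ S, ∀ x ∈ Lg i, ∀ v ∈ V, ⁅x, v⁆ = 0) :
    (lieSpan R L V).toSubmodule ≤ ⨆ d, M d := by
  set K := hLg.subalgebra S hS
  have hgen : ∀ x : L, ∀ v ∈ V, ⁅x, v⁆ ∈ lieSpan R K V := by
    intro x v hv
    refine lie_mem_of_mem_iSup_left (fun i x hx => ?_) (htop ▸ Submodule.mem_top)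
    by_cases hi : i ∈ S
    · exact lie_mem (lieSpan R K V) (x := (⟨x, hLg.mem_subalgebra hS hi hx⟩ : K))
        (subset_lieSpan hv)
    · rw [hV i hi x hx v hv]; exact zero_mem _
  let N : LieSubmodule R K L :=
    { (⨆ d, M d) with
      lie_mem := fun {k _} hm => lie_mem_of_mem_iSup (fun (j : S) d x hx m hm =>
        Submodule.mem_iSup_of_mem ((j : ℤ) + d) (hM j j.2 d x hx m hm)) k.2 hm }
  calc (lieSpan R L V).toSubmodule ≤ (lieSpan R K V).toSubmodule :=
        toSubmodule_lieSpan_le_of_lie_mem K hgen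
    _ ≤ N := (lieSpan_le (N := N)).mpr hVM

theorem eq_of_ne_bot_of_lie_mem [LieAlgebra.IsSimple R L] (hLg : IsLieGraded Lg)
    (hind : iSupIndep Lg) (htop : ⨆ i, Lg i = ⊤) {s : ℤ} (hbound : ∀ i, s < i → Lg i = ⊥)
    {V : Submodule R L} (hVs : V ≤ Lg s) (hV0 : ∀ x ∈ Lg 0, ∀ v ∈ V, ⁅x, v⁆ ∈ V)
    (hV : V ≠ ⊥) : V = Lg s := by
  set M := Function.update Lg s V
  have hMLg : M ≤ Lg := by
    intro d
    rcases eq_or_ne d s with rfl | hd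
    · simpa [M] using hVs
    · simp [M, Function.update_of_ne hd]
  have hM : ∀ j ∈ Set.Iic (0 : ℤ), ∀ d, ∀ x ∈ Lg j, ∀ m ∈ M d, ⁅x, m⁆ ∈ M (j + d) := by
    intro j (hj : j ≤ 0) d x hx m hm
    by_cases hjd : j + d = s
    · rcases eq_or_ne d s with rfl | hd
      · obtain rfl : j = 0 := by omega
        simp only [M, Function.update_self, zero_add] at hm ⊢
        exact hV0 x hx m hm
      · have hm0 : m = 0 := by simpa [hbound d (by omega)] using hMLg d hm
        rw [hm0, lie_zero]
        exact zero_mem _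
    · rw [show M (j + d) = Lg (j + d) from Function.update_of_ne hjd _ _]
      exact hLg j d x hx m (hMLg d hm)
  have hle := hLg.toSubmodule_lieSpan_le_iSup htop (S := Set.Iic 0)
    (fun _ hi _ hj => Set.mem_Iic.mpr (add_nonpos hi hj)) hM
    (fun v hv => Submodule.mem_iSup_of_mem s (by simpa [M] using hv))
    (fun i hi x hx v hv =>
      hLg.lie_eq_zero_of_lt_add hbound (by rw [Set.mem_Iic] at hi; omega) hx (hVs hv))
  rw [LieAlgebra.IsSimple.lieSpan_eq_top hV, top_toSubmodule] at hle
  refine le_antisymm hVs ?_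
  calc Lg s ≤ (⨆ d, M d) ⊓ Lg s := le_inf (le_top.trans hle) le_rfl
    _ = V := (hind.iSup_inf_eq_of_le hMLg s).trans (Function.update_self _ _ _)

def annihilatorAbove (Lg : ℤ → Submodule R L) (s e : ℤ) : Submodule R L where
  carrier := {z | z ∈ Lg e ∧ ∀ m, s ≤ e + m → ∀ y ∈ Lg m, ⁅z, y⁆ = 0}
  add_mem' ha hb := ⟨add_mem ha.1 hb.1, fun m hm y hy => by
    rw [add_lie, ha.2 m hm y hy, hb.2 m hm y hy, add_zero]⟩
  zero_mem' := ⟨zero_mem _, fun _ _ _ _ => zero_lie _⟩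
  smul_mem' c z hz := ⟨Submodule.smul_mem _ c hz.1, fun m hm y hy => by
    rw [smul_lie, hz.2 m hm y hy, smul_zero]⟩

theorem annihilatorAbove_le (s e : ℤ) : annihilatorAbove Lg s e ≤ Lg e := fun _ hz => hz.1

theorem lie_mem_annihilatorAbove (hLg : IsLieGraded Lg) {s j e : ℤ} (hj : j ≤ 0) {x z : L}
    (hx : x ∈ Lg j) (hz : z ∈ annihilatorAbove Lg s e) :
    ⁅x, z⁆ ∈ annihilatorAbove Lg s (j + e) := by
  refine ⟨hLg j e x hx z hz.1, fun m hm y hy => ?_⟩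
  rw [lie_lie, hz.2 m (by omega) y hy, hz.2 (j + m) (by omega) _ (hLg j m x hx y hy), lie_zero,
    sub_zero]

theorem lie_eq_zero_of_le_add [LieAlgebra.IsSimple R L] (hLg : IsLieGraded Lg)
    (hind : iSupIndep Lg) (htop : ⨆ i, Lg i = ⊤) {s : ℤ} (hbound : ∀ i, s < i → Lg i = ⊥)
    (hs : Lg s ≠ ⊥) (h0 : ∀ x ∈ Lg 0, ∀ y ∈ Lg s, ⁅x, y⁆ = 0) {e m : ℤ} (hem : s ≤ e + m)
    {x y : L} (hx : x ∈ Lg e) (hy : y ∈ Lg m) : ⁅x, y⁆ = 0 := by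
  have hkill : ∀ i, 0 ≤ i → ∀ x ∈ Lg i, ∀ v ∈ Lg s, ⁅x, v⁆ = 0 := by
    intro i hi x hx v hv
    rcases hi.eq_or_lt with rfl | hi
    · exact h0 x hx v hv
    · exact hLg.lie_eq_zero_of_lt_add hbound (by omega) hx hv
  have hle := hLg.toSubmodule_lieSpan_le_iSup htop (S := Set.Iio 0)
    (fun _ hi _ hj => Set.mem_Iio.mpr (add_neg hi hj)) (M := annihilatorAbove Lg s)
    (fun j hj d x hx z hz => hLg.lie_mem_annihilatorAbove (le_of_lt hj) hx hz)
    (fun v hv => Submodule.mem_iSup_of_mem s ⟨hv, fun m hm y hy => by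
      rw [← lie_skew, hkill m (by omega) y hy v hv, neg_zero]⟩)
    (fun i hi x hx v hv => hkill i (not_lt.mp hi) x hx v hv)
  rw [LieAlgebra.IsSimple.lieSpan_eq_top hs, top_toSubmodule] at hle
  have hxe : x ∈ (⨆ d, annihilatorAbove Lg s d) ⊓ Lg e := ⟨hle trivial, hx⟩
  rw [hind.iSup_inf_eq_of_le (annihilatorAbove_le s) e] at hxe
  exact hxe.2 m hem y hy

theorem eq_bot_of_lie_eq_zero [LieAlgebra.IsSimple R L] (hLg : IsLieGraded Lg)
    (hind : iSupIndep Lg) (htop : ⨆ i, Lg i = ⊤) {s : ℤ}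
    (h : ∀ e m, e + m = s → ∀ x ∈ Lg e, ∀ y ∈ Lg m, ⁅x, y⁆ = 0) : Lg s = ⊥ := by
  set M := Function.update Lg s ⊥
  have hMLg : M ≤ Lg := by
    intro d
    rcases eq_or_ne d s with rfl | hd
    · simp [M]
    · simp [M, Function.update_of_ne hd]
  have hle : (⊤ : Submodule R L) ≤ ⨆ d, M d := by
    rw [← top_toSubmodule (R := R) (L := L), ← LieAlgebra.IsSimple.lie_top_eq_top,
      lieIdeal_oper_eq_linear_span', Submodule.span_le]
    rintro _ ⟨x, -, y, -, rfl⟩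
    refine lie_mem_of_mem_iSup (fun e m x hx y hy => ?_) (htop ▸ Submodule.mem_top)
      (htop ▸ Submodule.mem_top)
    by_cases hem : e + m = s
    · rw [h e m hem x hx y hy]; exact zero_mem _
    · refine Submodule.mem_iSup_of_mem (e + m) ?_
      rw [show M (e + m) = Lg (e + m) from Function.update_of_ne hem _ _]
      exact hLg e m x hx y hy
  calc Lg s = (⨆ d, M d) ⊓ Lg s := (inf_eq_right.mpr (le_top.trans hle)).symm
    _ = ⊥ := (hind.iSup_inf_eq_of_le hMLg s).trans (Function.update_self _ _ _)

theorem span_lie_degree_zero_eq [LieAlgebra.IsSimple R L] (hLg : IsLieGraded Lg)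
    (hind : iSupIndep Lg) (htop : ⨆ i, Lg i = ⊤) {s : ℤ} (hbound : ∀ i, s < i → Lg i = ⊥)
    (hs : Lg s ≠ ⊥) :
    Submodule.span R {z : L | ∃ x ∈ Lg 0, ∃ y ∈ Lg s, z = ⁅x, y⁆} = Lg s := by
  set V := Submodule.span R {z : L | ∃ x ∈ Lg 0, ∃ y ∈ Lg s, z = ⁅x, y⁆}
  have hVs : V ≤ Lg s := by
    rw [Submodule.span_le]
    rintro _ ⟨x, hx, y, hy, rfl⟩
    simpa using hLg 0 s x hx y hy
  have hV0 : ∀ x ∈ Lg 0, ∀ v ∈ V, ⁅x, v⁆ ∈ V := by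
    intro x hx v hv
    induction hv using Submodule.span_induction with
    | mem z hz =>
      obtain ⟨a, ha, y, hy, rfl⟩ := hz
      rw [leibniz_lie]
      exact add_mem (Submodule.subset_span ⟨_, by simpa using hLg 0 0 x hx a ha, y, hy, rfl⟩)
        (Submodule.subset_span ⟨a, ha, _, by simpa using hLg 0 s x hx y hy, rfl⟩)
    | zero => rw [lie_zero]; exact zero_mem _
    | add a b _ _ ha hb => rw [lie_add]; exact add_mem ha hb
    | smul c a _ ha => rw [lie_smul]; exact Submodule.smul_mem _ c ha
  have hV : V ≠ ⊥ := by
    intro hV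
    have h0 : ∀ x ∈ Lg 0, ∀ y ∈ Lg s, ⁅x, y⁆ = 0 := fun x hx y hy =>
      (Submodule.mem_bot R).mp (hV ▸ Submodule.subset_span ⟨x, hx, y, hy, rfl⟩)
    exact hs (hLg.eq_bot_of_lie_eq_zero hind htop fun e m hem _ hx _ hy =>
      hLg.lie_eq_zero_of_le_add hind htop hbound hs h0 hem.ge hx hy)
  exact hLg.eq_of_ne_bot_of_lie_mem hind htop hbound hVs hV0 hV

end IsLieGraded

theorem graded_simple_bracket_zero_extreme_general
    (F : Type*) [Field F] (L : Type*) [LieRing L] [LieAlgebra F L]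
    [LieAlgebra.IsSimple F L]
    (r s : ℤ)
    (Lg : ℤ → Submodule F L)
    (hinternal : DirectSum.IsInternal Lg)
    (hbracket : ∀ i j : ℤ, ∀ x ∈ Lg i, ∀ y ∈ Lg j, ⁅x, y⁆ ∈ Lg (i + j))
    (hbound : ∀ i : ℤ, (i < -r ∨ s < i) → Lg i = ⊥)
    (hner : Lg (-r) ≠ ⊥) (hnes : Lg s ≠ ⊥) :
    Submodule.span F {z : L | ∃ x ∈ Lg 0, ∃ y ∈ Lg s, z = ⁅x, y⁆} = Lg s ∧
    Submodule.span F {z : L | ∃ x ∈ Lg 0, ∃ y ∈ Lg (-r), z = ⁅x, y⁆} = Lg (-r) := by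
  have hLg : IsLieGraded Lg := hbracket
  have hind := hinternal.submodule_iSupIndep
  have htop := hinternal.submodule_iSup_eq_top
  refine ⟨hLg.span_lie_degree_zero_eq hind htop (fun i hi => hbound i (.inr hi)) hnes, ?_⟩
  have hneg := hLg.comp_neg.span_lie_degree_zero_eq (hind.comp neg_injective)
    (((Equiv.neg ℤ).iSup_comp (g := Lg)).trans htop) (s := r)
    (fun i hi => hbound (-i) (.inl (by omega))) hner
  simpa using hneg

/-- Let `L = ⊕_{i=-r}^{s} L_i` be a simple, finite-dimensional, ℤ-graded Lie
algebra over a field `F`. Then `⁅L_0, L_s⁆ = L_s` and `⁅L_0, L_{-r}⁆ = L_{-r}`, where `⁅A, B⁆`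
denotes the `F`-span of all brackets. -/
theorem graded_simple_bracket_zero_extreme
    (F : Type*) [Field F] (L : Type*) [LieRing L] [LieAlgebra F L]
    [FiniteDimensional F L] [LieAlgebra.IsSimple F L]
    (r s : ℤ) (hr : 1 ≤ r) (hs : 1 ≤ s)
    (Lg : ℤ → Submodule F L)
    (hinternal : DirectSum.IsInternal Lg)
    (hbracket : ∀ i j : ℤ, ∀ x ∈ Lg i, ∀ y ∈ Lg j, ⁅x, y⁆ ∈ Lg (i + j))
    (hbound : ∀ i : ℤ, (i < -r ∨ s < i) → Lg i = ⊥)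
    (hner : Lg (-r) ≠ ⊥) (hnes : Lg s ≠ ⊥) :
    Submodule.span F {z : L | ∃ x ∈ Lg 0, ∃ y ∈ Lg s, z = ⁅x, y⁆} = Lg s ∧
    Submodule.span F {z : L | ∃ x ∈ Lg 0, ∃ y ∈ Lg (-r), z = ⁅x, y⁆} = Lg (-r) :=
  graded_simple_bracket_zero_extreme_general F L r s Lg hinternal hbracket hbound hner hnes
end

section
/- Let L = ⊕_{i=−r}^{s} L_i be a simple, finite-dimensional, ℤ-graded Lie algebra over a field F, and set L⁺ = ⊕_{i≥1} L_i and L⁻ = ⊕_{i≤−1} L_i. Then the centralizer of L⁺ in L equals L_s, and the centralizer of L⁻ in L equals L_{−r}: C_L(L⁺) = L_s and C_L(L⁻) = L_{−r}. -/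
/-!
Let `C` be the centralizer of `L⁺` and `N = ⊕_{i<s} L_i`, so that `L = N ⊕ L_s` and `L_s ⊆ C`;
it suffices to show `C ∩ N = 0`. The smallest subspace containing `C ∩ N` and stable under
`ad L_j` for all `j ≤ 0` stays inside `N`, and it is also stable under `ad L_j` for `j > 0`
(in effect `U(L) = U(L_{≤0}) U(L_{>0})`), by `⁅z, ⁅g, v⁆⁆ = ⁅⁅z, g⁆, v⁆ + ⁅g, ⁅z, v⁆⁆` and
because `⁅z, g⁆` is again homogeneous.
So it is an ideal missing `L_s ≠ 0`, hence zero by simplicity. The statement about `C_L(L⁻)`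
is the same one for the reversed grading `i ↦ L_{-i}`.
-/

namespace LieAlgebra

variable (R : Type*) {L : Type*} [CommRing R] [LieRing L] [LieAlgebra R L]

section adClosure

def adClosure (S X : Set L) : Submodule R L :=
  sInf {P | X ⊆ P ∧ ∀ g ∈ S, ∀ v ∈ P, ⁅g, v⁆ ∈ P}

variable {R} {S T X : Set L}

lemma subset_adClosure : X ⊆ adClosure R S X := fun _ hx =>
  Submodule.mem_sInf.mpr fun _ hP => hP.1 hx

lemma lie_mem_adClosure {g v : L} (hg : g ∈ S) (hv : v ∈ adClosure R S X) :
    ⁅g, v⁆ ∈ adClosure R S X :=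
  Submodule.mem_sInf.mpr fun P hP => hP.2 g hg v (Submodule.mem_sInf.mp hv P hP)

lemma adClosure_le {P : Submodule R L} (hXP : X ⊆ P) (hP : ∀ g ∈ S, ∀ v ∈ P, ⁅g, v⁆ ∈ P) :
    adClosure R S X ≤ P :=
  sInf_le ⟨hXP, hP⟩

lemma lie_mem_adClosure_of_lie_mem_union (hST : ∀ z ∈ T, ∀ g ∈ S, ⁅z, g⁆ ∈ S ∪ T)
    (hX : ∀ z ∈ T, ∀ x ∈ X, ⁅z, x⁆ ∈ adClosure R S X) {z v : L} (hz : z ∈ T)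
    (hv : v ∈ adClosure R S X) : ⁅z, v⁆ ∈ adClosure R S X := by
  set A := adClosure R S X
  have hA : A ≤ A ⊓ ⨅ z ∈ T, A.comap (ad R L z) := by
    refine adClosure_le (fun x hx => ?_) fun g hg v hv => ?_
    · simp only [SetLike.mem_coe, Submodule.mem_inf, Submodule.mem_iInf, Submodule.mem_comap,
        ad_apply]
      exact ⟨subset_adClosure hx, fun z hz => hX z hz x hx⟩
    · simp only [Submodule.mem_inf, Submodule.mem_iInf, Submodule.mem_comap, ad_apply] at hv ⊢
      obtain ⟨hvA, hzv⟩ := hv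
      refine ⟨lie_mem_adClosure hg hvA, fun z hz => ?_⟩
      rw [leibniz_lie]
      refine add_mem ?_ (lie_mem_adClosure hg (hzv z hz))
      rcases hST z hz g hg with h | h
      · exact lie_mem_adClosure h hvA
      · exact hzv _ h
  exact (Submodule.mem_iInf _).mp ((Submodule.mem_iInf _).mp (hA hv).2 z) hz

lemma lie_mem_adClosure_of_span_eq_top (hST : ∀ z ∈ T, ∀ g ∈ S, ⁅z, g⁆ ∈ S ∪ T)
    (hX : ∀ z ∈ T, ∀ x ∈ X, ⁅z, x⁆ ∈ adClosure R S X) (hspan : Submodule.span R (S ∪ T) = ⊤)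
    (y : L) {v : L} (hv : v ∈ adClosure R S X) : ⁅y, v⁆ ∈ adClosure R S X := by
  have hy : y ∈ Submodule.span R (S ∪ T) := hspan ▸ Submodule.mem_top
  induction hy using Submodule.span_induction with
  | mem y hy =>
    rcases hy with hS | hT
    · exact lie_mem_adClosure hS hv
    · exact lie_mem_adClosure_of_lie_mem_union hST hX hT hv
  | zero => simp
  | add y y' _ _ h h' => simpa only [add_lie] using add_mem h h'
  | smul c y _ h => simpa only [smul_lie] using Submodule.smul_mem _ c h

lemma adClosure_eq_bot_or_eq_top [IsSimple R L] (hST : ∀ z ∈ T, ∀ g ∈ S, ⁅z, g⁆ ∈ S ∪ T)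
    (hX : ∀ z ∈ T, ∀ x ∈ X, ⁅z, x⁆ ∈ adClosure R S X) (hspan : Submodule.span R (S ∪ T) = ⊤) :
    adClosure R S X = ⊥ ∨ adClosure R S X = ⊤ := by
  let I : LieIdeal R L :=
    { adClosure R S X with lie_mem := lie_mem_adClosure_of_span_eq_top hST hX hspan _ }
  rcases IsSimple.eq_bot_or_eq_top I with h | h
  · exact .inl (congrArg LieSubmodule.toSubmodule h)
  · exact .inr (congrArg LieSubmodule.toSubmodule h)

end adClosure

section Graded

open Set

variable {R} (Lg : ℤ → Submodule R L)

def homogeneousSet (D : Set ℤ) : Set L :=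
  {x | ∃ j ∈ D, x ∈ Lg j}

variable {Lg}

lemma lie_mem_homogeneousSet_union
    (hbracket : ∀ i j : ℤ, ∀ x ∈ Lg i, ∀ y ∈ Lg j, ⁅x, y⁆ ∈ Lg (i + j)) {D D' : Set ℤ}
    {z g : L} (hz : z ∈ homogeneousSet Lg D) (hg : g ∈ homogeneousSet Lg D') :
    ⁅z, g⁆ ∈ homogeneousSet Lg (Iic 0) ∪ homogeneousSet Lg (Ioi 0) := by
  obtain ⟨i, -, hz⟩ := hz
  obtain ⟨j, -, hg⟩ := hg
  rcases le_or_gt (i + j) 0 with h | h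
  · exact .inl ⟨i + j, h, hbracket i j z hz g hg⟩
  · exact .inr ⟨i + j, h, hbracket i j z hz g hg⟩

lemma span_homogeneousSet_union_eq_top (htop : ⨆ i, Lg i = ⊤) :
    Submodule.span R (homogeneousSet Lg (Iic 0) ∪ homogeneousSet Lg (Ioi 0)) = ⊤ := by
  refine eq_top_iff.mpr (htop ▸ iSup_le fun i => ?_)
  refine fun x hx => Submodule.subset_span ?_
  rcases le_or_gt i 0 with h | h
  · exact .inl ⟨i, h, hx⟩
  · exact .inr ⟨i, h, hx⟩

lemma lie_mem_iSup_lt (hbracket : ∀ i j : ℤ, ∀ x ∈ Lg i, ∀ y ∈ Lg j, ⁅x, y⁆ ∈ Lg (i + j))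
    {s : ℤ} {g v : L} (hg : g ∈ homogeneousSet Lg (Iic 0)) (hv : v ∈ ⨆ i < s, Lg i) :
    ⁅g, v⁆ ∈ ⨆ i < s, Lg i := by
  obtain ⟨j, hj, hg⟩ := hg
  have hN : ⨆ i < s, Lg i ≤ (⨆ i < s, Lg i).comap (ad R L g) :=
    iSup₂_le fun i hi w hw => (le_iSup₂_of_le (f := fun i (_ : i < s) => Lg i) (j + i)
      (by rw [mem_Iic] at hj; omega) le_rfl) (hbracket j i g hg w hw)
  exact hN hv

lemma mem_iSup_lt_sup (htop : ⨆ i, Lg i = ⊤) {s : ℤ} (hbound : ∀ i : ℤ, s < i → Lg i = ⊥)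
    (x : L) : x ∈ (⨆ i < s, Lg i) ⊔ Lg s := by
  have hle : ⨆ i, Lg i ≤ (⨆ i < s, Lg i) ⊔ Lg s := by
    refine iSup_le fun i => ?_
    rcases lt_trichotomy i s with h | rfl | h
    · exact le_sup_of_le_left (le_iSup₂_of_le (f := fun i (_ : i < s) => Lg i) i h le_rfl)
    · exact le_sup_right
    · simp [hbound i h]
  exact hle (htop ▸ Submodule.mem_top)

lemma lie_eq_zero_of_mem_of_one_le
    (hbracket : ∀ i j : ℤ, ∀ x ∈ Lg i, ∀ y ∈ Lg j, ⁅x, y⁆ ∈ Lg (i + j)) {s : ℤ}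
    (hbound : ∀ i : ℤ, s < i → Lg i = ⊥) {i : ℤ} (hi : 1 ≤ i) {y z : L} (hy : y ∈ Lg s)
    (hz : z ∈ Lg i) : ⁅y, z⁆ = 0 := by
  simpa [hbound (s + i) (by omega)] using hbracket s i y hy z hz

theorem forall_lie_eq_zero_iff_mem [IsSimple R L] (hindep : iSupIndep Lg) (htop : ⨆ i, Lg i = ⊤)
    (hbracket : ∀ i j : ℤ, ∀ x ∈ Lg i, ∀ y ∈ Lg j, ⁅x, y⁆ ∈ Lg (i + j)) {s : ℤ}
    (hbound : ∀ i : ℤ, s < i → Lg i = ⊥) (hnes : Lg s ≠ ⊥) (x : L) :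
    (∀ i : ℤ, 1 ≤ i → ∀ y ∈ Lg i, ⁅x, y⁆ = 0) ↔ x ∈ Lg s := by
  refine ⟨fun hx => ?_, fun hx i hi y hy =>
    lie_eq_zero_of_mem_of_one_le hbracket hbound hi hx hy⟩
  set N := ⨆ i < s, Lg i
  set X : Set L := {n | n ∈ N ∧ ∀ i : ℤ, 1 ≤ i → ∀ y ∈ Lg i, ⁅n, y⁆ = 0}
  have hdisj : Disjoint (Lg s) N := (hindep s).mono_right <|
    iSup₂_le fun i hi => le_iSup₂_of_le (f := fun i (_ : i ≠ s) => Lg i) i hi.ne le_rfl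
  have hXN : adClosure R (homogeneousSet Lg (Iic 0)) X ≤ N :=
    adClosure_le (fun n hn => hn.1) fun g hg v hv => lie_mem_iSup_lt hbracket hg hv
  have hXbot : adClosure R (homogeneousSet Lg (Iic 0)) X = ⊥ := by
    have hXcomm : ∀ z ∈ homogeneousSet Lg (Ioi 0), ∀ n ∈ X,
        ⁅z, n⁆ ∈ adClosure R (homogeneousSet Lg (Iic 0)) X := by
      rintro z ⟨i, hi, hz⟩ n hn
      rw [← lie_skew, hn.2 i (Order.one_le_iff_pos.mpr hi) z hz, neg_zero]
      exact zero_mem _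
    refine (adClosure_eq_bot_or_eq_top
      (fun z hz g hg => lie_mem_homogeneousSet_union hbracket hz hg) hXcomm
      (span_homogeneousSet_union_eq_top htop)).resolve_right
      fun htop' => hnes (hdisj.eq_bot_of_le (le_top.trans (htop' ▸ hXN)))
  obtain ⟨n, hn, y, hy, rfl⟩ := Submodule.mem_sup.mp (mem_iSup_lt_sup htop hbound x)
  have hnX : n ∈ X := ⟨hn, fun i hi z hz => by
    rw [← add_sub_cancel_right n y, sub_lie, hx i hi z hz,
      lie_eq_zero_of_mem_of_one_le hbracket hbound hi hy hz, sub_zero]⟩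
  have hn0 : n = 0 := (Submodule.mem_bot R).mp (hXbot ▸ subset_adClosure hnX)
  rwa [hn0, zero_add]

end Graded

end LieAlgebra

theorem graded_simple_centralizer_of_positive_negative_parts_general
    (F : Type*) [Field F] (L : Type*) [LieRing L] [LieAlgebra F L]
    [LieAlgebra.IsSimple F L]
    (r s : ℤ)
    (Lg : ℤ → Submodule F L)
    (hinternal : DirectSum.IsInternal Lg)
    (hbracket : ∀ i j : ℤ, ∀ x ∈ Lg i, ∀ y ∈ Lg j, ⁅x, y⁆ ∈ Lg (i + j))
    (hbound : ∀ i : ℤ, (i < -r ∨ s < i) → Lg i = ⊥)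
    (hner : Lg (-r) ≠ ⊥) (hnes : Lg s ≠ ⊥) :
    (∀ x : L, (∀ i : ℤ, 1 ≤ i → ∀ y ∈ Lg i, ⁅x, y⁆ = 0) ↔ x ∈ Lg s) ∧
    (∀ x : L, (∀ i : ℤ, i ≤ -1 → ∀ y ∈ Lg i, ⁅x, y⁆ = 0) ↔ x ∈ Lg (-r)) := by
  obtain ⟨hindep, htop⟩ :=
    (DirectSum.isInternal_submodule_iff_iSupIndep_and_iSup_eq_top Lg).mp hinternal
  refine ⟨LieAlgebra.forall_lie_eq_zero_iff_mem hindep htop hbracket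
    (fun i hi => hbound i (.inr hi)) hnes, fun x => ?_⟩
  have hrev := LieAlgebra.forall_lie_eq_zero_iff_mem (Lg := fun i => Lg (-i))
    (hindep.comp neg_injective) ((Equiv.neg ℤ).iSup_comp.trans htop)
    (fun i j x hx y hy => neg_add i j ▸ hbracket (-i) (-j) x hx y hy)
    (fun i hi => hbound (-i) (.inl (neg_lt_neg hi))) hner x
  rw [← hrev]
  refine ⟨fun h i hi y hy => h (-i) (by omega) y hy, fun h i hi y hy => ?_⟩
  exact h (-i) (by omega) y (by rwa [neg_neg])

/-- Let `L = ⊕_{i=-r}^{s} L_i` be a simple, finite-dimensional, ℤ-graded Lie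
algebra over a field `F`, and set `L⁺ = ⊕_{i≥1} L_i`, `L⁻ = ⊕_{i≤-1} L_i`. Then
`C_L(L⁺) = L_s` and `C_L(L⁻) = L_{-r}`. -/
theorem graded_simple_centralizer_of_positive_negative_parts
    (F : Type*) [Field F] (L : Type*) [LieRing L] [LieAlgebra F L]
    [FiniteDimensional F L] [LieAlgebra.IsSimple F L]
    (r s : ℤ) (hr : 1 ≤ r) (hs : 1 ≤ s)
    (Lg : ℤ → Submodule F L)
    (hinternal : DirectSum.IsInternal Lg)
    (hbracket : ∀ i j : ℤ, ∀ x ∈ Lg i, ∀ y ∈ Lg j, ⁅x, y⁆ ∈ Lg (i + j))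
    (hbound : ∀ i : ℤ, (i < -r ∨ s < i) → Lg i = ⊥)
    (hner : Lg (-r) ≠ ⊥) (hnes : Lg s ≠ ⊥) :
    (∀ x : L, (∀ i : ℤ, 1 ≤ i → ∀ y ∈ Lg i, ⁅x, y⁆ = 0) ↔ x ∈ Lg s) ∧
    (∀ x : L, (∀ i : ℤ, i ≤ -1 → ∀ y ∈ Lg i, ⁅x, y⁆ = 0) ↔ x ∈ Lg (-r)) :=
  graded_simple_centralizer_of_positive_negative_parts_general F L r s Lg hinternal hbracket hbound
    hner hnes
end

section
/- Let p be a prime and let a, b, r be natural numbers with a ≥ 1, 1 ≤ b ≤ p − 1, and 1 ≤ r ≤ p. Then the binomial coefficient C(r·p^a − b, p^a) is congruent to r − 1 modulo p. -/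
/-!
By Lucas' theorem, `C(n, p ^ a * k) ≡ C(n / p ^ a, k) (mod p)`: the lower base-`p` digits of
`p ^ a * k` vanish and `C(d, 0) = 1`. With `k = 1` the coefficient `C(r p^a - b, p^a)` is
therefore congruent to `(r p^a - b) / p^a`, which is `r - 1` as soon as `0 < b ≤ p^a`.
-/

theorem Nat.mul_sub_div_eq_sub_one {m b : ℕ} (r : ℕ) (hb : 0 < b) (hbm : b ≤ m) :
    (r * m - b) / m = r - 1 := by
  cases r with
  | zero => simp
  | succ s =>
    rw [add_one_mul, Nat.add_sub_assoc hbm, mul_comm, Nat.mul_add_div (by omega),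
      Nat.div_eq_of_lt (by omega)]
    rfl

namespace Choose

variable {p : ℕ} [Fact p.Prime]

theorem choose_mul_modEq_choose_div (n k : ℕ) :
    n.choose (p * k) ≡ (n / p).choose k [MOD p] := by
  have hp : 0 < p := (Fact.out : p.Prime).pos
  simpa [Nat.mul_mod_right, Nat.mul_div_cancel_left k hp] using
    choose_modEq_choose_mod_mul_choose_div_nat (n := n) (k := p * k) (p := p)

theorem choose_pow_mul_modEq_choose_div (a n k : ℕ) :
    n.choose (p ^ a * k) ≡ (n / p ^ a).choose k [MOD p] := by
  induction a generalizing n with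
  | zero => simp [Nat.ModEq.refl]
  | succ a ih =>
    rw [pow_succ', mul_assoc, ← Nat.div_div_eq_div_mul]
    exact (choose_mul_modEq_choose_div n _).trans (ih _)

end Choose

theorem choose_mul_pow_sub_congr_general
    (p a b r : ℕ) (hp : p.Prime) (ha : 1 ≤ a)
    (hb1 : 1 ≤ b) (hb2 : b ≤ p - 1) :
    (r * p ^ a - b).choose (p ^ a) ≡ r - 1 [MOD p] := by
  have : Fact p.Prime := ⟨hp⟩
  have hb : b ≤ p ^ a := hb2.trans ((Nat.sub_le p 1).trans (Nat.le_self_pow (by omega) p))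
  simpa [Nat.mul_sub_div_eq_sub_one r hb1 hb] using
    Choose.choose_pow_mul_modEq_choose_div (p := p) a (r * p ^ a - b) 1

/-- Let `p` be a prime and `a, b, r` natural numbers with `a ≥ 1`,
`1 ≤ b ≤ p - 1`, and `1 ≤ r ≤ p`. Then `C(r·p^a - b, p^a) ≡ r - 1 (mod p)`. -/
theorem choose_mul_pow_sub_congr
    (p a b r : ℕ) (hp : p.Prime) (ha : 1 ≤ a)
    (hb1 : 1 ≤ b) (hb2 : b ≤ p - 1) (hr1 : 1 ≤ r) (hr2 : r ≤ p) :
    (r * p ^ a - b).choose (p ^ a) ≡ r - 1 [MOD p] :=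
  choose_mul_pow_sub_congr_general p a b r hp ha hb1 hb2
end
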